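/- Let n ≥ 2 and let A be an n×n row-stochastic strictly diagonally dominant positive real matrix. Then for every i, c_i(A^{-T}) ≥ (c_min(A) − 1)/(n − 1), i.e., A^{-1}_{ii} / Σ_{j≠i} |A^{-1}_{ji}| ≥ (c_min(A) − 1)/(n − 1). -/

import Mathlib

/-!
Let `x` be the `i`-th column of `A⁻¹`, so `A x = eᵢ`. In every row `j ≠ i` the diagonal term
`A j j * x j` is balanced by the off-diagonal ones, so strict diagonal dominance forces `|x|` to
peak at `i`, and then `x i > 0` from row `i`. Row `j ≠ i` now gives `A j j * |x j| ≤ R_j * x i`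
with `R_j = ∑_{l ≠ j} |A j l|`, i.e. `c_min(A) * |x j| ≤ x i`; summing over the `n - 1` indices
`j ≠ i` yields `c_min(A) / (n - 1) ≤ x i / ∑_{j ≠ i} |x j|`.
-/

open Matrix Finset Real

noncomputable def rowEntropy {n : ℕ} (A : Matrix (Fin n) (Fin n) ℝ) (i : Fin n) : ℝ :=
  -∑ k, A i k * Real.logb 2 (A i k)

noncomputable def Kvec {n : ℕ} (A : Matrix (Fin n) (Fin n) ℝ) (j : Fin n) : ℝ :=
  ∑ i, A⁻¹ j i * rowEntropy A i

noncomputable def Kmax {n : ℕ} (A : Matrix (Fin n) (Fin n) ℝ) : ℝ := ⨆ j, Kvec A j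

noncomputable def Kmin {n : ℕ} (A : Matrix (Fin n) (Fin n) ℝ) : ℝ := ⨅ j, Kvec A j

def IsPmf {n : ℕ} (p : Fin n → ℝ) : Prop := (∀ i, 0 ≤ p i) ∧ ∑ i, p i = 1

noncomputable def mutualInfo {n : ℕ} (A : Matrix (Fin n) (Fin n) ℝ) (p : Fin n → ℝ) : ℝ :=
  -(∑ j, Aᵀ.mulVec p j * Real.logb 2 (Aᵀ.mulVec p j))
    + ∑ i, ∑ j, p i * A i j * Real.logb 2 (A i j)

noncomputable def capacity {n : ℕ} (A : Matrix (Fin n) (Fin n) ℝ) : ℝ :=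
  sSup {x : ℝ | ∃ p : Fin n → ℝ, IsPmf p ∧ mutualInfo A p = x}

noncomputable def qStar {n : ℕ} (A : Matrix (Fin n) (Fin n) ℝ) (j : Fin n) : ℝ :=
  (2 : ℝ) ^ (-Kvec A j) / ∑ i, (2 : ℝ) ^ (-Kvec A i)

noncomputable def pStar {n : ℕ} (A : Matrix (Fin n) (Fin n) ℝ) : Fin n → ℝ :=
  (A⁻¹)ᵀ.mulVec (qStar A)

noncomputable def Ubound {n : ℕ} (A : Matrix (Fin n) (Fin n) ℝ) : ℝ :=
  -(∑ j, qStar A j * Real.logb 2 (qStar A j))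
    + ∑ i, ∑ j, pStar A i * A i j * Real.logb 2 (A i j)

noncomputable def cmin {n : ℕ} (A : Matrix (Fin n) (Fin n) ℝ) : ℝ :=
  ⨅ i, A i i / ∑ j ∈ Finset.univ.erase i, |A i j|

noncomputable def Hmax {n : ℕ} (A : Matrix (Fin n) (Fin n) ℝ) : ℝ := ⨆ i, rowEntropy A i

noncomputable def sigmaMin {n : ℕ} (A : Matrix (Fin n) (Fin n) ℝ) : ℝ :=
  Real.sqrt (⨅ i, (Matrix.isHermitian_conjTranspose_mul_self A).eigenvalues i)

def RowStochastic {n : ℕ} (A : Matrix (Fin n) (Fin n) ℝ) : Prop :=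
  (∀ i j, 0 ≤ A i j) ∧ ∀ i, ∑ j, A i j = 1

def SDDPos {n : ℕ} (A : Matrix (Fin n) (Fin n) ℝ) : Prop :=
  (∀ i j, 0 < A i j) ∧ ∀ i, ∑ j ∈ Finset.univ.erase i, A i j < A i i

def StrictlyDiagDominant {ι : Type*} [Fintype ι] [DecidableEq ι] (A : Matrix ι ι ℝ) : Prop :=
  ∀ j, ∑ l ∈ univ.erase j, |A j l| < |A j j|

theorem mulVec_apply_eq_diag_add_sum_erase {ι R : Type*} [Fintype ι] [DecidableEq ι]
    [NonUnitalNonAssocSemiring R] (A : Matrix ι ι R) (x : ι → R) (j : ι) :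
    (A *ᵥ x) j = A j j * x j + ∑ l ∈ univ.erase j, A j l * x l :=
  (add_sum_erase univ (fun l => A j l * x l) (mem_univ j)).symm

theorem mulVec_col_inv_eq_single {ι R : Type*} [Fintype ι] [DecidableEq ι] [CommRing R]
    {A : Matrix ι ι R} (hA : IsUnit A.det) (i : ι) : A *ᵥ A⁻¹.col i = Pi.single i 1 := by
  rw [← mulVec_single_one, mulVec_mulVec, mul_nonsing_inv A hA, one_mulVec]

section DiagDominance

variable {ι : Type*} [Fintype ι] [DecidableEq ι] {A : Matrix ι ι ℝ} {x : ι → ℝ} {i j : ι}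

theorem StrictlyDiagDominant.det_ne_zero (hA : StrictlyDiagDominant A) : A.det ≠ 0 :=
  det_ne_zero_of_sum_row_lt_diag fun k => by simpa only [Real.norm_eq_abs] using hA k

theorem abs_diag_mul_abs_le_of_mulVec_apply_eq_zero (hj : (A *ᵥ x) j = 0) :
    |A j j| * |x j| ≤ ∑ l ∈ univ.erase j, |A j l| * |x l| := by
  have hdiag : A j j * x j = -∑ l ∈ univ.erase j, A j l * x l := by
    linarith [mulVec_apply_eq_diag_add_sum_erase A x j]
  calc |A j j| * |x j| = |∑ l ∈ univ.erase j, A j l * x l| := by rw [← abs_mul, hdiag, abs_neg]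
    _ ≤ ∑ l ∈ univ.erase j, |A j l * x l| := abs_sum_le_sum_abs _ _
    _ = ∑ l ∈ univ.erase j, |A j l| * |x l| := by simp only [abs_mul]

theorem sum_erase_abs_mul_le_of_abs_le (A : Matrix ι ι ℝ) (j : ι) {b : ℝ}
    (hb : ∀ l, |x l| ≤ b) :
    ∑ l ∈ univ.erase j, |A j l| * |x l| ≤ (∑ l ∈ univ.erase j, |A j l|) * b := by
  rw [sum_mul]
  exact sum_le_sum fun l _ => mul_le_mul_of_nonneg_left (hb l) (abs_nonneg _)

theorem StrictlyDiagDominant.abs_le_abs_of_mulVec_apply_eq_zero (hA : StrictlyDiagDominant A)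
    (hx : ∀ j ≠ i, (A *ᵥ x) j = 0) (j : ι) : |x j| ≤ |x i| := by
  obtain ⟨k, -, hk⟩ := exists_max_image univ (fun l => |x l|) ⟨i, mem_univ i⟩
  by_cases hki : k = i
  · exact hki ▸ hk j (mem_univ j)
  have hrow := (abs_diag_mul_abs_le_of_mulVec_apply_eq_zero (hx k hki)).trans
    (sum_erase_abs_mul_le_of_abs_le A k fun l => hk l (mem_univ l))
  have hxk : |x k| ≤ 0 := by nlinarith [hA k, abs_nonneg (x k)]
  linarith [hk j (mem_univ j), abs_nonneg (x i)]

theorem StrictlyDiagDominant.pos_of_mulVec_apply_pos (hA : StrictlyDiagDominant A)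
    (hAii : 0 < A i i) (hmax : ∀ j, |x j| ≤ |x i|) (hpos : 0 < (A *ᵥ x) i) : 0 < x i := by
  by_contra! hxi
  have hR := hA i
  rw [abs_of_pos hAii] at hR
  have hoff : ∑ l ∈ univ.erase i, A i l * x l ≤ (∑ l ∈ univ.erase i, |A i l|) * |x i| :=
    (sum_le_sum fun l _ => (le_abs_self _).trans (abs_mul (A i l) (x l)).le).trans
      (sum_erase_abs_mul_le_of_abs_le A i hmax)
  have hrow : (A *ᵥ x) i ≤ (∑ l ∈ univ.erase i, |A i l| - A i i) * |x i| := by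
    rw [mulVec_apply_eq_diag_add_sum_erase, abs_of_nonpos hxi] at *
    linarith
  exact hpos.not_ge (hrow.trans (mul_nonpos_of_nonpos_of_nonneg (by linarith) (abs_nonneg _)))

theorem StrictlyDiagDominant.div_mul_abs_le_abs (hA : StrictlyDiagDominant A)
    (hx : ∀ j ≠ i, (A *ᵥ x) j = 0) (hj : j ≠ i) :
    A j j / (∑ l ∈ univ.erase j, |A j l|) * |x j| ≤ |x i| := by
  have hrow := (abs_diag_mul_abs_le_of_mulVec_apply_eq_zero (hx j hj)).trans
    (sum_erase_abs_mul_le_of_abs_le A j (hA.abs_le_abs_of_mulVec_apply_eq_zero hx))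
  rcases (sum_nonneg fun l _ => abs_nonneg (A j l) : 0 ≤ ∑ l ∈ univ.erase j, |A j l|).eq_or_lt
    with hR | hR
  · simp [← hR]
  rw [div_mul_eq_mul_div, div_le_iff₀ hR]
  nlinarith [le_abs_self (A j j), abs_nonneg (x j)]

/-- If `x` were supported on `{i}`, then `(A x) j = A j i * x i` would not vanish. -/
theorem sum_erase_abs_pos_of_mulVec_apply_eq_zero (hx : (A *ᵥ x) j = 0) (hj : j ≠ i)
    (hAji : A j i ≠ 0) (hxi : x i ≠ 0) : 0 < ∑ l ∈ univ.erase i, |x l| := by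
  refine (sum_nonneg fun l _ => abs_nonneg (x l)).lt_of_ne fun hS => ?_
  have hsingle : x = Pi.single i (x i) := by
    funext l
    by_cases hl : l = i
    · subst hl; simp
    · simpa [hl] using (sum_eq_zero_iff_of_nonneg fun l _ => abs_nonneg (x l)).1 hS.symm l
        (mem_erase.2 ⟨hl, mem_univ l⟩)
  rw [hsingle] at hx
  exact mul_ne_zero hAji hxi (by simpa using hx)

theorem mul_sum_erase_abs_le {c : ℝ} (hc : ∀ j ≠ i, c * |x j| ≤ |x i|) :
    c * ∑ j ∈ univ.erase i, |x j| ≤ (Fintype.card ι - 1 : ℝ) * |x i| := by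
  have hcard : ((univ.erase i).card : ℝ) = Fintype.card ι - 1 := by
    rw [card_erase_of_mem (mem_univ i), card_univ,
      Nat.cast_sub (Fintype.card_pos_iff.2 ⟨i⟩), Nat.cast_one]
  rw [mul_sum, ← hcard, ← nsmul_eq_mul]
  exact sum_le_card_nsmul _ _ _ fun j hj => hc j (ne_of_mem_erase hj)

end DiagDominance

theorem cmin_le {n : ℕ} (A : Matrix (Fin n) (Fin n) ℝ) (j : Fin n) :
    cmin A ≤ A j j / ∑ l ∈ univ.erase j, |A j l| :=
  ciInf_le (Finite.bddBelow_range _) j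

theorem SDDPos.strictlyDiagDominant {n : ℕ} {A : Matrix (Fin n) (Fin n) ℝ} (hA : SDDPos A) :
    StrictlyDiagDominant A := fun j => by
  simpa only [abs_of_pos (hA.1 j _)] using hA.2 j

theorem gershgorin_ratio_inv_transpose_lower_bound_general {n : ℕ} (hn : 2 ≤ n)
    (A : Matrix (Fin n) (Fin n) ℝ) (hA : SDDPos A) :
    ∀ i, (cmin A - 1) / ((n : ℝ) - 1) ≤
      A⁻¹ i i / ∑ j ∈ Finset.univ.erase i, |A⁻¹ j i| := by
  intro i
  have hdd := hA.strictlyDiagDominant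
  have hx : A *ᵥ (fun j => A⁻¹ j i) = Pi.single i 1 :=
    mulVec_col_inv_eq_single hdd.det_ne_zero.isUnit i
  have hoff : ∀ j ≠ i, (A *ᵥ fun j => A⁻¹ j i) j = 0 := fun j hj => by simp [hx, hj]
  have hmax := hdd.abs_le_abs_of_mulVec_apply_eq_zero hoff
  have hxi : 0 < A⁻¹ i i :=
    hdd.pos_of_mulVec_apply_pos (x := fun j => A⁻¹ j i) (hA.1 i i) hmax (by simp [hx])
  obtain ⟨j, hj⟩ := Fintype.exists_ne_of_one_lt_card (by rw [Fintype.card_fin]; omega) i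
  have hS : 0 < ∑ l ∈ univ.erase i, |A⁻¹ l i| :=
    sum_erase_abs_pos_of_mulVec_apply_eq_zero (hoff j hj) hj (hA.1 j i).ne' hxi.ne'
  have hsum := mul_sum_erase_abs_le fun j hj =>
    (mul_le_mul_of_nonneg_right (cmin_le A j) (abs_nonneg _)).trans (hdd.div_mul_abs_le_abs hoff hj)
  simp only [Fintype.card_fin, abs_of_pos hxi] at hsum
  have hn' : (0 : ℝ) < n - 1 := by
    have : (2 : ℝ) ≤ n := by exact_mod_cast hn
    linarith
  calc (cmin A - 1) / ((n : ℝ) - 1) ≤ cmin A / ((n : ℝ) - 1) := by gcongr; linarith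
    _ ≤ A⁻¹ i i / ∑ l ∈ univ.erase i, |A⁻¹ l i| := by
      rw [div_le_div_iff₀ hn' hS]; linarith

theorem gershgorin_ratio_inv_transpose_lower_bound {n : ℕ} (hn : 2 ≤ n)
    (A : Matrix (Fin n) (Fin n) ℝ) (hst : RowStochastic A) (hA : SDDPos A) :
    ∀ i, (cmin A - 1) / ((n : ℝ) - 1) ≤
      A⁻¹ i i / ∑ j ∈ Finset.univ.erase i, |A⁻¹ j i| :=
  gershgorin_ratio_inv_transpose_lower_bound_general hn A hA
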